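/- Let n = pq with p, q distinct primes, let e be coprime to φ(n), and let k be a positive integer. Then Σ_{d | k} |T_{n,e,d}| = gcd(e^k − 1, p − 1) · gcd(e^k − 1, q − 1), where T_{n,e,d} is the set of units x modulo n with x^(e^d) ≡ x (mod n) and x^(e^j) ≢ x (mod n) for all positive j < d. -/

import Mathlib

/-! The units in `T_{n,e,d}` are exactly the points of minimal period `d` of the power map
`u ↦ u ^ e` on `(ZMod n)ˣ`. Summing over `d ∣ k` therefore counts the points of period `k`,
i.e. the solutions of `u ^ (e ^ k - 1) = 1`. By the Chinese remainder theorem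
`(ZMod (p * q))ˣ ≃* (ZMod p)ˣ × (ZMod q)ˣ`, and in the cyclic group `(ZMod p)ˣ` of order `p - 1`
the equation `u ^ N = 1` has `gcd N (p - 1)` solutions. -/

open Function

namespace Function

variable {α : Type*} (f : α → α)

theorem minimalPeriod_eq_iff_of_pos {d : ℕ} (hd : 0 < d) (x : α) :
    minimalPeriod f x = d ↔
      IsPeriodicPt f d x ∧ ∀ j, 0 < j → j < d → ¬ IsPeriodicPt f j x := by
  refine ⟨fun h => h ▸ ⟨isPeriodicPt_minimalPeriod f x,
    fun j hj hjd => not_isPeriodicPt_of_pos_of_lt_minimalPeriod hj.ne' hjd⟩, ?_⟩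
  rintro ⟨hper, hmin⟩
  have hpos := hper.minimalPeriod_pos hd
  refine (hper.minimalPeriod_le hd).antisymm (not_lt.mp fun hlt => ?_)
  exact hmin _ hpos hlt (isPeriodicPt_minimalPeriod f x)

theorem sum_card_minimalPeriod_eq_card_isPeriodicPt [Finite α] {k : ℕ} (hk : k ≠ 0) :
    ∑ d ∈ k.divisors, Nat.card {x // minimalPeriod f x = d} =
      Nat.card {x // IsPeriodicPt f k x} := by
  classical
  have := Fintype.ofFinite α
  simp only [Nat.card_eq_fintype_card, Fintype.card_subtype]
  rw [Finset.card_eq_sum_card_fiberwise (f := minimalPeriod f) fun x hx =>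
    Nat.mem_divisors.mpr ⟨isPeriodicPt_iff_minimalPeriod_dvd.mp (Finset.mem_filter.mp hx).2, hk⟩]
  refine Finset.sum_congr rfl fun d hd => congrArg Finset.card (Finset.ext fun x => ?_)
  simp only [Finset.mem_filter, Finset.mem_univ, true_and,
    isPeriodicPt_iff_minimalPeriod_dvd]
  exact ⟨fun h => ⟨h ▸ Nat.dvd_of_mem_divisors hd, h⟩, And.right⟩

end Function

theorem isPeriodicPt_pow_iff {G : Type*} [Group G] {e : ℕ} (he : e ≠ 0) (k : ℕ) (g : G) :
    IsPeriodicPt (· ^ e) k g ↔ g ^ (e ^ k - 1) = 1 := by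
  rw [IsPeriodicPt, IsFixedPt, pow_iterate]
  dsimp only
  rw [← pow_sub_one_mul (pow_ne_zero k he), mul_eq_right]

section PowEqOne

variable {G H : Type*}

theorem MulEquiv.card_pow_eq_one_congr [Monoid G] [Monoid H] (φ : G ≃* H) (N : ℕ) :
    Nat.card {g : G // g ^ N = 1} = Nat.card {h : H // h ^ N = 1} :=
  Nat.card_congr <| φ.toEquiv.subtypeEquiv fun g => by
    rw [MulEquiv.toEquiv_eq_coe, EquivLike.coe_coe, ← map_pow, MulEquivClass.map_eq_one_iff]

theorem Prod.card_pow_eq_one [Monoid G] [Monoid H] (N : ℕ) :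
    Nat.card {v : G × H // v ^ N = 1} =
      Nat.card {g : G // g ^ N = 1} * Nat.card {h : H // h ^ N = 1} := by
  rw [← Nat.card_prod]
  exact Nat.card_congr <| (Equiv.subtypeEquivRight fun v => by
    simp only [Prod.ext_iff, Prod.pow_fst, Prod.pow_snd, Prod.fst_one, Prod.snd_one]).trans
    Equiv.subtypeProdEquivProd

theorem IsCyclic.card_pow_eq_one [CommGroup G] [IsCyclic G] [Finite G] (N : ℕ) :
    Nat.card {g : G // g ^ N = 1} = (Nat.card G).gcd N := by
  rw [← IsCyclic.card_powMonoidHom_ker G N]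
  exact Nat.card_congr <| Equiv.subtypeEquivRight fun g => by
    rw [MonoidHom.mem_ker, powMonoidHom_apply]

end PowEqOne

namespace ZMod

theorem card_units_pow_eq_one_of_prime {p : ℕ} (hp : p.Prime) (N : ℕ) :
    Nat.card {u : (ZMod p)ˣ // u ^ N = 1} = N.gcd (p - 1) := by
  have := Fact.mk hp
  rw [IsCyclic.card_pow_eq_one, Nat.card_eq_fintype_card, ZMod.card_units, Nat.gcd_comm]

theorem card_units_pow_eq_one_of_mul_primes {p q : ℕ} (hp : p.Prime) (hq : q.Prime) (hpq : p ≠ q)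
    (N : ℕ) :
    Nat.card {u : (ZMod (p * q))ˣ // u ^ N = 1} = N.gcd (p - 1) * N.gcd (q - 1) := by
  let crt : (ZMod (p * q))ˣ ≃* (ZMod p)ˣ × (ZMod q)ˣ :=
    (Units.mapEquiv (ZMod.chineseRemainder ((Nat.coprime_primes hp hq).mpr hpq)).toMulEquiv).trans
      MulEquiv.prodUnits
  rw [crt.card_pow_eq_one_congr, Prod.card_pow_eq_one, card_units_pow_eq_one_of_prime hp,
    card_units_pow_eq_one_of_prime hq]

theorem card_coprime_lt_eq_card_units (n : ℕ) [NeZero n] (P : ZMod n → Prop) :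
    Nat.card {x : ℕ // x < n ∧ x.Coprime n ∧ P x} = Nat.card {u : (ZMod n)ˣ // P u} :=
  Nat.card_congr
    { toFun x := ⟨ZMod.unitOfCoprime x.1 x.2.2.1, x.2.2.2⟩
      invFun u := ⟨(u.1 : ZMod n).val, ZMod.val_lt _, ZMod.val_coe_unit_coprime u.1, by
        simpa only [ZMod.natCast_val, ZMod.cast_id', id] using u.2⟩
      left_inv x := Subtype.ext (ZMod.val_cast_of_lt x.2.1)
      right_inv u := Subtype.ext (Units.ext (ZMod.natCast_zmod_val _)) }

theorem card_coprime_lt_exactPeriod_eq_card_units (n e : ℕ) [NeZero n] {d : ℕ} (hd : 0 < d) :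
    Nat.card {x : ℕ // x < n ∧ x.Coprime n ∧ x ^ e ^ d ≡ x [MOD n] ∧
        ∀ j, 0 < j → j < d → ¬ x ^ e ^ j ≡ x [MOD n]} =
      Nat.card {u : (ZMod n)ˣ // minimalPeriod (· ^ e) u = d} := by
  have hmod (x a : ℕ) : x ^ a ≡ x [MOD n] ↔ (x : ZMod n) ^ a = x := by
    rw [← ZMod.natCast_eq_natCast_iff, Nat.cast_pow]
  have hper (u : (ZMod n)ˣ) (j : ℕ) : IsPeriodicPt (· ^ e) j u ↔ (u : ZMod n) ^ e ^ j = u := by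
    rw [IsPeriodicPt, IsFixedPt, pow_iterate, Units.ext_iff, Units.val_pow_eq_pow_val]
  simp only [hmod, minimalPeriod_eq_iff_of_pos _ hd, hper]
  exact card_coprime_lt_eq_card_units n
    fun z => z ^ e ^ d = z ∧ ∀ j, 0 < j → j < d → ¬ z ^ e ^ j = z

end ZMod

theorem stmt10 (p q e k : ℕ) (hp : p.Prime) (hq : q.Prime) (hpq : p ≠ q)
    (he : Nat.Coprime e (Nat.totient (p * q))) (hk : 0 < k) :
    ∑ d ∈ k.divisors,
        Nat.card {x : ℕ // x < p * q ∧ Nat.Coprime x (p * q) ∧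
          x ^ e ^ d ≡ x [MOD p * q] ∧
          ∀ j, 0 < j → j < d → ¬ x ^ e ^ j ≡ x [MOD p * q]} =
      Nat.gcd (e ^ k - 1) (p - 1) * Nat.gcd (e ^ k - 1) (q - 1) := by
  have he0 : e ≠ 0 := by
    rintro rfl
    rw [Nat.coprime_zero_left, Nat.totient_eq_one_iff] at he
    have := Nat.mul_le_mul hp.two_le hq.two_le
    omega
  have : NeZero (p * q) := ⟨Nat.mul_ne_zero hp.ne_zero hq.ne_zero⟩
  calc _ = ∑ d ∈ k.divisors, Nat.card {u : (ZMod (p * q))ˣ // minimalPeriod (· ^ e) u = d} :=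
        Finset.sum_congr rfl fun d hd =>
          ZMod.card_coprime_lt_exactPeriod_eq_card_units _ _ (Nat.pos_of_mem_divisors hd)
    _ = Nat.card {u : (ZMod (p * q))ˣ // IsPeriodicPt (· ^ e) k u} :=
        sum_card_minimalPeriod_eq_card_isPeriodicPt _ hk.ne'
    _ = Nat.card {u : (ZMod (p * q))ˣ // u ^ (e ^ k - 1) = 1} := by
        simp only [isPeriodicPt_pow_iff he0]
    _ = _ := ZMod.card_units_pow_eq_one_of_mul_primes hp hq hpq _
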